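/- arXiv:0809.4856 — 3 statements merged into one kernel-verified Lean document; each statement's English description precedes it below -/
import Mathlib

section
/- Let Z be a bounded random variable on a finite probability space with E(Z) = m, and let {∅,Ω} = F_0 ⊆ F_1 ⊆ ... ⊆ F_t be a filtration. Let Z_j = E(Z | F_j), let ran_j be the conditional range of Z_j given F_{j−1}, let R_t² = Σ_{j=1}^t ran_j², and let r̂_t² = sup_ω R_t²(ω). Then for all u ≥ 0, P(|Z − m| ≥ u) ≤ 2·exp(−2u²/r̂_t²). More generally, for any value r², P({|Z − m| ≥ u} ∩ {R_t² ≤ r²}) ≤ 2·exp(−2u²/r²). -/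
/-!
For a martingale `Y` with conditional ranges `ran_j` and `R_k² = ∑_{j ≤ k} ran_j²`, the process
`W_k = exp (l (Y_k - Y_0) - l² R_k² / 8)` is a supermartingale with `W_0 = 1`. Indeed, on an atom of
`ℱ_k` the increment `Y_{k+1} - Y_k` has mean zero and ranges over an interval of length
`ran_{k+1}`, which is constant on the atom, so Hoeffding's lemma bounds the mean of
`exp (l (Y_{k+1} - Y_k))` over the atom by `exp (l² ran_{k+1}² / 8)`. Hence `E W_t ≤ 1`, and
Markov's inequality with `l = 4u/r²` gives `P(Y_t - Y_0 ≥ u, R_t² ≤ r²) ≤ exp (-2u²/r²)`. The same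
bound for `-Y` yields the two-sided inequality for the Doob martingale `E(Z | ℱ_j)`.
-/

open MeasureTheory

noncomputable section

variable {Ω : Type*}

/-- The conditional supremum of `Y` in the σ-field `F`: at `ω` it is the maximum
of `Y` over the smallest `F`-measurable event containing `ω`. -/
def condSup (F : MeasurableSpace Ω) (Y : Ω → ℝ) (ω : Ω) : ℝ :=
  sInf {r | ∃ A : Set Ω, MeasurableSet[F] A ∧ ω ∈ A ∧ r = sSup (Y '' A)}

def condRange (F : MeasurableSpace Ω) (Y : Ω → ℝ) (ω : Ω) : ℝ :=
  condSup F Y ω + condSup F (fun ω' => -Y ω') ω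

section Atoms

variable {F : MeasurableSpace Ω} {ω ω' : Ω}

def atomOf (F : MeasurableSpace Ω) (ω : Ω) : Set Ω :=
  ⋂₀ {A : Set Ω | MeasurableSet[F] A ∧ ω ∈ A}

lemma mem_atomOf (F : MeasurableSpace Ω) (ω : Ω) : ω ∈ atomOf F ω :=
  fun _ hA => hA.2

lemma atomOf_subset {A : Set Ω} (hA : MeasurableSet[F] A) (hω : ω ∈ A) : atomOf F ω ⊆ A :=
  Set.sInter_subset_of_mem ⟨hA, hω⟩

lemma measurableSet_atomOf [Finite Ω] (F : MeasurableSpace Ω) (ω : Ω) :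
    MeasurableSet[F] (atomOf F ω) :=
  .sInter (Set.to_countable _) fun _ hA => hA.1

lemma atomOf_eq_of_mem [Finite Ω] (h : ω' ∈ atomOf F ω) : atomOf F ω' = atomOf F ω := by
  have hω : ω ∈ atomOf F ω' := fun A hA => by_contra fun hωA =>
    atomOf_subset hA.1.compl hωA h hA.2
  exact (atomOf_subset (measurableSet_atomOf F ω) h).antisymm
    (atomOf_subset (measurableSet_atomOf F ω') hω)

lemma Measurable.eq_of_mem_atomOf {β : Type*} [MeasurableSpace β] [MeasurableSingletonClass β]
    {f : Ω → β} (hf : Measurable[F] f) (h : ω' ∈ atomOf F ω) : f ω' = f ω :=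
  atomOf_subset (hf (measurableSet_singleton (f ω))) rfl h

lemma measurable_of_forall_mem_atomOf [Finite Ω] {β : Type*} [MeasurableSpace β] {f : Ω → β}
    (hf : ∀ ω ω', ω' ∈ atomOf F ω → f ω' = f ω) : Measurable[F] f := by
  intro s _
  have : f ⁻¹' s = ⋃ ω ∈ f ⁻¹' s, atomOf F ω := by
    refine Set.Subset.antisymm (fun ω hω => Set.mem_biUnion hω (mem_atomOf F ω)) ?_
    simp only [Set.iUnion_subset_iff]
    intro ω hω ω' hω'
    rwa [Set.mem_preimage, hf ω ω' hω']
  rw [this]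
  exact .biUnion (Set.to_countable _) fun ω _ => measurableSet_atomOf F ω

lemma condSup_eq_sSup_image_atomOf [Finite Ω] (F : MeasurableSpace Ω) (Y : Ω → ℝ) (ω : Ω) :
    condSup F Y ω = sSup (Y '' atomOf F ω) := by
  refine IsLeast.csInf_eq ⟨⟨atomOf F ω, measurableSet_atomOf F ω, mem_atomOf F ω, rfl⟩, ?_⟩
  rintro r ⟨A, hA, hωA, rfl⟩
  exact csSup_le_csSup (Set.toFinite _).bddAbove ⟨Y ω, ω, mem_atomOf F ω, rfl⟩
    (Set.image_mono (atomOf_subset hA hωA))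

lemma le_condSup [Finite Ω] (Y : Ω → ℝ) (h : ω' ∈ atomOf F ω) : Y ω' ≤ condSup F Y ω := by
  rw [condSup_eq_sSup_image_atomOf]
  exact le_csSup (Set.toFinite _).bddAbove ⟨ω', h, rfl⟩

lemma condSup_le [Finite Ω] {Y : Ω → ℝ} {c : ℝ} (h : ∀ ω' ∈ atomOf F ω, Y ω' ≤ c) :
    condSup F Y ω ≤ c := by
  rw [condSup_eq_sSup_image_atomOf]
  exact csSup_le ⟨Y ω, ω, mem_atomOf F ω, rfl⟩ (Set.forall_mem_image.2 h)

lemma condSup_sub_of_measurable [Finite Ω] (Y : Ω → ℝ) {V : Ω → ℝ} (hV : Measurable[F] V)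
    (ω : Ω) : condSup F (fun ω' => Y ω' - V ω') ω = condSup F Y ω - V ω := by
  refine le_antisymm (condSup_le fun ω' h => ?_) (sub_le_iff_le_add.2 (condSup_le fun ω' h => ?_))
  · rw [hV.eq_of_mem_atomOf h]
    exact sub_le_sub_right (le_condSup Y h) _
  · rw [← hV.eq_of_mem_atomOf h, ← sub_le_iff_le_add]
    exact le_condSup (fun ω' => Y ω' - V ω') h

lemma measurable_condSup [Finite Ω] (F : MeasurableSpace Ω) (Y : Ω → ℝ) :
    Measurable[F] (condSup F Y) :=
  measurable_of_forall_mem_atomOf fun _ _ h => by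
    rw [condSup_eq_sSup_image_atomOf, condSup_eq_sSup_image_atomOf, atomOf_eq_of_mem h]

lemma measurable_condRange [Finite Ω] (F : MeasurableSpace Ω) (Y : Ω → ℝ) :
    Measurable[F] (condRange F Y) :=
  (measurable_condSup F Y).add (measurable_condSup F _)

lemma condRange_neg (F : MeasurableSpace Ω) (Y : Ω → ℝ) : condRange F (-Y) = condRange F Y := by
  funext ω
  simp only [condRange, Pi.neg_def, neg_neg, add_comm]

lemma condRange_sub_of_measurable [Finite Ω] (Y : Ω → ℝ) {V : Ω → ℝ} (hV : Measurable[F] V) :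
    condRange F (fun ω => Y ω - V ω) = condRange F Y := by
  funext ω
  have hV' : Measurable[F] fun ω => -V ω := hV.neg
  simp only [condRange, condSup_sub_of_measurable Y hV, neg_sub', condSup_sub_of_measurable _ hV']
  ring

lemma integral_le_integral_of_forall_setIntegral_atomOf_le [Finite Ω] [mΩ : MeasurableSpace Ω]
    {μ : Measure Ω} [IsFiniteMeasure μ] (hF : F ≤ mΩ) {f g : Ω → ℝ} (hf : Integrable f μ)
    (hg : Integrable g μ)
    (hfg : ∀ ω, ∫ x in atomOf F ω, f x ∂μ ≤ ∫ x in atomOf F ω, g x ∂μ) :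
    ∫ x, f x ∂μ ≤ ∫ x, g x ∂μ := by
  classical
  let atoms := (Set.finite_range (atomOf F)).toFinset
  have measurableSet_of_mem {A} (hA : A ∈ atoms) : MeasurableSet A := by
    obtain ⟨ω, rfl⟩ := (Set.Finite.mem_toFinset _).1 hA
    exact hF _ (measurableSet_atomOf F ω)
  have pairwise_disjoint : (atoms : Set (Set Ω)).PairwiseDisjoint id := by
    rintro _ hA _ hB hne
    obtain ⟨ω, rfl⟩ := (Set.Finite.mem_toFinset _).1 hA
    obtain ⟨ω', rfl⟩ := (Set.Finite.mem_toFinset _).1 hB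
    exact Set.disjoint_left.2 fun x hxω hxω' =>
      hne (by rw [← atomOf_eq_of_mem hxω, ← atomOf_eq_of_mem hxω'])
  have iUnion_eq_univ : (⋃ A ∈ atoms, A) = Set.univ :=
    Set.eq_univ_of_forall fun x =>
      Set.mem_biUnion ((Set.Finite.mem_toFinset _).2 ⟨x, rfl⟩) (mem_atomOf F x)
  have integral_eq (h : Ω → ℝ) (hh : Integrable h μ) :
      ∫ x, h x ∂μ = ∑ A ∈ atoms, ∫ x in A, h x ∂μ := by
    rw [← integral_biUnion_finset atoms (fun A hA => measurableSet_of_mem hA) pairwise_disjoint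
      fun A _ => hh.integrableOn, iUnion_eq_univ, setIntegral_univ]
  rw [integral_eq f hf, integral_eq g hg]
  refine Finset.sum_le_sum fun A hA => ?_
  obtain ⟨ω, rfl⟩ := (Set.Finite.mem_toFinset _).1 hA
  exact hfg ω

end Atoms

lemma Measurable.integrable_of_finite [Finite Ω] [MeasurableSpace Ω] {μ : Measure Ω}
    [IsFiniteMeasure μ] {f : Ω → ℝ} (hf : Measurable f) : Integrable f μ :=
  .of_bound hf.aestronglyMeasurable _
    (ae_of_all _ fun ω => le_ciSup (Set.finite_range fun ω => ‖f ω‖).bddAbove ω)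

open ProbabilityTheory in
lemma setIntegral_exp_mul_le [MeasurableSpace Ω] {μ : Measure Ω} [IsFiniteMeasure μ]
    {A : Set Ω} (hA : MeasurableSet A) {X : Ω → ℝ} (hX : Measurable X) {a b : ℝ}
    (hXA : ∀ ω ∈ A, X ω ∈ Set.Icc a b) (hX0 : ∫ ω in A, X ω ∂μ = 0) (l : ℝ) :
    ∫ ω in A, Real.exp (l * X ω) ∂μ ≤ μ.real A * Real.exp (l ^ 2 * (b - a) ^ 2 / 8) := by
  rcases eq_or_ne (μ A) 0 with hμA | hμA
  · simp [Measure.restrict_eq_zero.2 hμA, measureReal_def, hμA]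
  have : IsProbabilityMeasure μ[|A] := cond_isProbabilityMeasure hμA
  have integral_cond (f : Ω → ℝ) : ∫ ω, f ω ∂μ[|A] = (μ.real A)⁻¹ * ∫ ω in A, f ω ∂μ := by
    rw [ProbabilityTheory.cond, integral_smul_measure, measureReal_def, ENNReal.toReal_inv,
      smul_eq_mul]
  have hoeffding := (hasSubgaussianMGF_of_mem_Icc_of_integral_eq_zero hX.aemeasurable
    (ae_cond_of_forall_mem hA hXA) (by rw [integral_cond, hX0, mul_zero])).mgf_le l
  have hμA_pos : 0 < μ.real A := ENNReal.toReal_pos hμA (measure_ne_top μ A)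
  rw [mgf, integral_cond, inv_mul_le_iff₀ hμA_pos] at hoeffding
  refine hoeffding.trans_eq ?_
  congr 2
  push_cast
  rw [Real.norm_eq_abs, div_pow, sq_abs]
  ring

open Real in
lemma integral_mul_exp_sub_condRange_le [Finite Ω] {F : MeasurableSpace Ω}
    [mΩ : MeasurableSpace Ω] {μ : Measure Ω} [IsFiniteMeasure μ] (hF : F ≤ mΩ) {G X : Ω → ℝ}
    (hG : Measurable[F] G) (hG0 : 0 ≤ G) (hX : Measurable X)
    (hX0 : ∀ A, MeasurableSet[F] A → ∫ ω in A, X ω ∂μ = 0) (l : ℝ) :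
    ∫ ω, G ω * exp (l * X ω - l ^ 2 * condRange F X ω ^ 2 / 8) ∂μ ≤ ∫ ω, G ω ∂μ := by
  have hc : Measurable[F] (condRange F X) := measurable_condRange F X
  have hGm : Measurable G := hG.mono hF le_rfl
  have hcm : Measurable (condRange F X) := hc.mono hF le_rfl
  refine integral_le_integral_of_forall_setIntegral_atomOf_le hF
    (Measurable.integrable_of_finite (by fun_prop)) hGm.integrable_of_finite fun ω₀ => ?_
  set A := atomOf F ω₀
  set c := condRange F X ω₀
  have hA : MeasurableSet A := hF _ (measurableSet_atomOf F ω₀)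
  have hXA : ∀ ω ∈ A, X ω ∈ Set.Icc (-condSup F (fun ω' => -X ω') ω₀) (condSup F X ω₀) :=
    fun ω h => ⟨neg_le.1 (le_condSup (fun ω' => -X ω') h), le_condSup X h⟩
  have hoeffding := setIntegral_exp_mul_le hA hX hXA (hX0 A (measurableSet_atomOf F ω₀)) l
  rw [sub_neg_eq_add] at hoeffding
  change _ ≤ _ * exp (l ^ 2 * c ^ 2 / 8) at hoeffding
  calc ∫ ω in A, G ω * exp (l * X ω - l ^ 2 * condRange F X ω ^ 2 / 8) ∂μ
      = ∫ ω in A, G ω₀ * exp (-(l ^ 2 * c ^ 2 / 8)) * exp (l * X ω) ∂μ :=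
        setIntegral_congr_fun hA fun ω h => by
          rw [hG.eq_of_mem_atomOf h, hc.eq_of_mem_atomOf h, sub_eq_neg_add, exp_add]
          ring
    _ = G ω₀ * exp (-(l ^ 2 * c ^ 2 / 8)) * ∫ ω in A, exp (l * X ω) ∂μ := integral_const_mul _ _
    _ ≤ G ω₀ * exp (-(l ^ 2 * c ^ 2 / 8)) * (μ.real A * exp (l ^ 2 * c ^ 2 / 8)) :=
        mul_le_mul_of_nonneg_left hoeffding (mul_nonneg (hG0 ω₀) (exp_pos _).le)
    _ = G ω₀ * μ.real A := by
        rw [mul_mul_mul_comm, ← exp_add, neg_add_cancel, exp_zero, mul_one]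
    _ = ∫ ω in A, G ω ∂μ := by
        rw [setIntegral_congr_fun hA fun ω h => hG.eq_of_mem_atomOf h, setIntegral_const,
          smul_eq_mul, mul_comm]

-- The paper's `R_k²`.
def condRangeSqSum (ℱ : ℕ → MeasurableSpace Ω) (Y : ℕ → Ω → ℝ) (k : ℕ) (ω : Ω) : ℝ :=
  ∑ j ∈ Finset.Icc 1 k, condRange (ℱ (j - 1)) (Y j) ω ^ 2

lemma condRangeSqSum_zero (ℱ : ℕ → MeasurableSpace Ω) (Y : ℕ → Ω → ℝ) :
    condRangeSqSum ℱ Y 0 = 0 := by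
  funext ω
  simp [condRangeSqSum]

lemma condRangeSqSum_succ (ℱ : ℕ → MeasurableSpace Ω) (Y : ℕ → Ω → ℝ) (k : ℕ) (ω : Ω) :
    condRangeSqSum ℱ Y (k + 1) ω = condRangeSqSum ℱ Y k ω + condRange (ℱ k) (Y (k + 1)) ω ^ 2 := by
  rw [condRangeSqSum, Finset.sum_Icc_succ_top (Nat.le_add_left 1 k), Nat.add_sub_cancel]
  rfl

lemma condRangeSqSum_neg (ℱ : ℕ → MeasurableSpace Ω) (Y : ℕ → Ω → ℝ) :
    condRangeSqSum ℱ (-Y) = condRangeSqSum ℱ Y := by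
  funext k ω
  simp only [condRangeSqSum, Pi.neg_apply, condRange_neg]

lemma measurable_condRangeSqSum [Finite Ω] {ℱ : ℕ → MeasurableSpace Ω} (hℱ : Monotone ℱ)
    (Y : ℕ → Ω → ℝ) (k : ℕ) : Measurable[ℱ k] (condRangeSqSum ℱ Y k) := by
  refine Finset.measurable_fun_sum _ fun j hj => ?_
  have hj : j - 1 ≤ k := by have := (Finset.mem_Icc.1 hj).2; omega
  exact ((measurable_condRange _ _).mono (hℱ hj) le_rfl).pow_const 2

namespace MeasureTheory.Martingale

open Real

variable [Finite Ω] [mΩ : MeasurableSpace Ω] {μ : Measure Ω} [IsProbabilityMeasure μ]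
  {ℱ : Filtration ℕ mΩ} {Y : ℕ → Ω → ℝ}

theorem integral_exp_mul_sub_condRangeSqSum_le_one (hY : Martingale Y ℱ μ) (l : ℝ) (k : ℕ) :
    ∫ ω, exp (l * (Y k ω - Y 0 ω) - l ^ 2 * condRangeSqSum ℱ Y k ω / 8) ∂μ ≤ 1 := by
  set W : ℕ → Ω → ℝ := fun k ω => exp (l * (Y k ω - Y 0 ω) - l ^ 2 * condRangeSqSum ℱ Y k ω / 8)
  suffices Antitone fun k => ∫ ω, W k ω ∂μ by
    simpa [W, condRangeSqSum_zero] using this (Nat.zero_le k)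
  refine antitone_nat_of_succ_le fun k => ?_
  have hYk (j : ℕ) (hj : j ≤ k) : Measurable[ℱ k] (Y j) :=
    ((hY.stronglyMeasurable j).mono (ℱ.mono hj)).measurable
  have hW : Measurable[ℱ k] (W k) := by
    have := measurable_condRangeSqSum ℱ.mono' Y k
    have := hYk 0 (Nat.zero_le k)
    have := hYk k le_rfl
    fun_prop
  have hX : Measurable fun ω => Y (k + 1) ω - Y k ω :=
    ((hY.stronglyMeasurable (k + 1)).measurable.mono (ℱ.le _) le_rfl).sub
      ((hY.stronglyMeasurable k).measurable.mono (ℱ.le _) le_rfl)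
  have hX0 (A : Set Ω) (hA : MeasurableSet[ℱ k] A) : ∫ ω in A, (Y (k + 1) ω - Y k ω) ∂μ = 0 := by
    rw [integral_sub (hY.integrable _).integrableOn (hY.integrable _).integrableOn,
      hY.setIntegral_eq k.le_succ hA, sub_self]
  have hWsucc : W (k + 1) = fun ω => W k ω * exp (l * (Y (k + 1) ω - Y k ω)
      - l ^ 2 * condRange (ℱ k) (fun ω => Y (k + 1) ω - Y k ω) ω ^ 2 / 8) := by
    funext ω
    rw [condRange_sub_of_measurable _ (hYk k le_rfl), ← exp_add]
    simp only [W, condRangeSqSum_succ]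
    ring_nf
  rw [hWsucc]
  exact integral_mul_exp_sub_condRange_le (ℱ.le k) hW (fun ω => (exp_pos _).le) hX hX0 l

theorem measureReal_sub_ge_le_exp (hY : Martingale Y ℱ μ) (t : ℕ) {u : ℝ} (hu : 0 ≤ u) (r2 : ℝ) :
    μ.real ({ω | u ≤ Y t ω - Y 0 ω} ∩ {ω | condRangeSqSum ℱ Y t ω ≤ r2})
      ≤ exp (-2 * u ^ 2 / r2) := by
  rcases le_or_gt r2 0 with hr2 | hr2
  · exact measureReal_le_one.trans (one_le_exp (div_nonneg_of_nonpos (by nlinarith) hr2))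
  set l := 4 * u / r2
  set W : Ω → ℝ := fun ω => exp (l * (Y t ω - Y 0 ω) - l ^ 2 * condRangeSqSum ℱ Y t ω / 8)
  have hW : Measurable W := by
    have := (measurable_condRangeSqSum ℱ.mono' Y t).mono (ℱ.le t) le_rfl
    have := (hY.stronglyMeasurable 0).measurable.mono (ℱ.le 0) le_rfl
    have := (hY.stronglyMeasurable t).measurable.mono (ℱ.le t) le_rfl
    fun_prop
  have hsub : {ω | u ≤ Y t ω - Y 0 ω} ∩ {ω | condRangeSqSum ℱ Y t ω ≤ r2}
      ⊆ {ω | exp (2 * u ^ 2 / r2) ≤ W ω} := by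
    rintro ω ⟨hYω, hRω⟩
    -- `l = 4u/r2` is the minimiser of `- l u + l² r2 / 8`
    have hl : 2 * u ^ 2 / r2 = l * u - l ^ 2 * r2 / 8 := by
      simp only [l]
      field_simp
      ring
    refine exp_le_exp.2 (hl ▸ sub_le_sub ?_ ?_)
    · exact mul_le_mul_of_nonneg_left hYω (by positivity)
    · exact div_le_div_of_nonneg_right (mul_le_mul_of_nonneg_left hRω (sq_nonneg l)) (by norm_num)
  have markov := mul_meas_ge_le_integral_of_nonneg (ae_of_all _ fun ω => (exp_pos _).le)
    (hW.integrable_of_finite (μ := μ)) (exp (2 * u ^ 2 / r2))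
  calc _ ≤ μ.real {ω | exp (2 * u ^ 2 / r2) ≤ W ω} := measureReal_mono hsub
    _ = exp (-2 * u ^ 2 / r2) *
          (exp (2 * u ^ 2 / r2) * μ.real {ω | exp (2 * u ^ 2 / r2) ≤ W ω}) := by
      rw [← mul_assoc, ← exp_add, neg_mul, neg_div, neg_add_cancel, exp_zero, one_mul]
    _ ≤ exp (-2 * u ^ 2 / r2) * 1 :=
      mul_le_mul_of_nonneg_left (markov.trans (hY.integral_exp_mul_sub_condRangeSqSum_le_one l t))
        (exp_pos _).le
    _ = exp (-2 * u ^ 2 / r2) := mul_one _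

theorem measureReal_abs_sub_ge_le_two_mul_exp (hY : Martingale Y ℱ μ) (t : ℕ) {u : ℝ} (hu : 0 ≤ u)
    (r2 : ℝ) :
    μ.real ({ω | u ≤ |Y t ω - Y 0 ω|} ∩ {ω | condRangeSqSum ℱ Y t ω ≤ r2})
      ≤ 2 * exp (-2 * u ^ 2 / r2) := by
  have hneg := hY.neg.measureReal_sub_ge_le_exp t hu r2
  rw [condRangeSqSum_neg] at hneg
  have hsub : {ω | u ≤ |Y t ω - Y 0 ω|} ∩ {ω | condRangeSqSum ℱ Y t ω ≤ r2}
      ⊆ ({ω | u ≤ Y t ω - Y 0 ω} ∩ {ω | condRangeSqSum ℱ Y t ω ≤ r2})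
        ∪ ({ω | u ≤ (-Y) t ω - (-Y) 0 ω} ∩ {ω | condRangeSqSum ℱ Y t ω ≤ r2}) := by
    rintro ω ⟨hYω : u ≤ |Y t ω - Y 0 ω|, hRω⟩
    rcases le_abs.1 hYω with h | h
    · exact Or.inl ⟨h, hRω⟩
    · refine Or.inr ⟨?_, hRω⟩
      change u ≤ -Y t ω - -Y 0 ω
      linarith
  calc _ ≤ _ := measureReal_mono hsub
    _ ≤ _ := measureReal_union_le _ _
    _ ≤ exp (-2 * u ^ 2 / r2) + exp (-2 * u ^ 2 / r2) :=
      add_le_add (hY.measureReal_sub_ge_le_exp t hu r2) hneg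
    _ = 2 * exp (-2 * u ^ 2 / r2) := (two_mul _).symm

end MeasureTheory.Martingale

/-- McDiarmid's martingale bounded-differences inequality (Theorem 3.14 of
McDiarmid 1998): a bounded random variable on a finite probability space
deviates from its mean by `u` with probability at most `2 exp(-2u²/r̂²)`, where
`r̂²` bounds the sum of squared conditional ranges of the Doob martingale. -/
theorem stmt7 [Fintype Ω] [mΩ : MeasurableSpace Ω]
    (μ : Measure Ω) [IsProbabilityMeasure μ]
    (t : ℕ) (ℱ : ℕ → MeasurableSpace Ω) (hmono : Monotone ℱ)
    (hle : ∀ j, ℱ j ≤ mΩ) (hF0 : ℱ 0 = ⊥)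
    (Z : Ω → ℝ) (hZmeas : Measurable[ℱ t] Z)
    (m : ℝ) (hm : m = ∫ ω, Z ω ∂μ)
    (R2 : Ω → ℝ)
    (hR2 : R2 = fun ω => ∑ j ∈ Finset.Icc 1 t,
      condRange (ℱ (j - 1)) (μ[Z|ℱ j]) ω ^ 2) :
    (∀ u : ℝ, 0 ≤ u →
      (μ {ω | u ≤ |Z ω - m|}).toReal
        ≤ 2 * Real.exp (-2 * u ^ 2 / (⨆ ω, R2 ω))) ∧
    ∀ u : ℝ, 0 ≤ u → ∀ r2 : ℝ,
      (μ ({ω | u ≤ |Z ω - m|} ∩ {ω | R2 ω ≤ r2})).toReal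
        ≤ 2 * Real.exp (-2 * u ^ 2 / r2) := by
  let ℱ' : Filtration ℕ mΩ := ⟨ℱ, hmono, hle⟩
  have hZ : Integrable Z μ := (hZmeas.mono (hle t) le_rfl).integrable_of_finite
  have hZt : μ[Z|ℱ t] = Z := condExp_of_stronglyMeasurable (hle t) hZmeas.stronglyMeasurable hZ
  have hZ0 : μ[Z|ℱ 0] = fun _ => m := by rw [hF0, condExp_bot, hm]
  have hR2_eq : condRangeSqSum ℱ' (fun j => μ[Z|ℱ' j]) t = R2 := hR2.symm
  have tail_bound (u : ℝ) (hu : 0 ≤ u) (r2 : ℝ) :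
      (μ ({ω | u ≤ |Z ω - m|} ∩ {ω | R2 ω ≤ r2})).toReal ≤ 2 * Real.exp (-2 * u ^ 2 / r2) := by
    have := (martingale_condExp Z ℱ' μ).measureReal_abs_sub_ge_le_two_mul_exp t hu r2
    rwa [hR2_eq, show μ[Z|ℱ' t] = Z from hZt, show μ[Z|ℱ' 0] = fun _ => m from hZ0] at this
  refine ⟨fun u hu => ?_, tail_bound⟩
  have hR2_le_iSup : {ω | R2 ω ≤ ⨆ ω, R2 ω} = Set.univ :=
    Set.eq_univ_of_forall fun ω => le_ciSup (Set.finite_range R2).bddAbove ω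
  simpa only [hR2_le_iSup, Set.inter_univ] using tail_bound u hu (⨆ ω, R2 ω)
end
end

section
/- For the Curie-Weiss (mean-field) Ising Glauber dynamics on n vertices with inverse temperature β < 1, the one-step Wasserstein contraction d_W(δ_σ P, δ_{σ'} P) ≤ 1 − (1−β)/n holds for all configurations σ, σ' ∈ {−1,1}^n differing in exactly one coordinate, where the metric is the Hamming distance. Consequently, the Gibbs measure π satisfies: for some constants c, C > 0, for all n, all u > 0, and all functions f : {−1,1}^n → ℝ that are 1-Lipschitz with respect to Hamming distance, π(|f − π(f)| ≥ u) ≤ C·e^{−u²/(c n)}. -/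
open scoped BigOperators Classical
open Filter

noncomputable section

variable {S : Type*}

/-- `f` is 1-Lipschitz with respect to `d`. -/
def IsLip (d : S → S → ℝ) (f : S → ℝ) : Prop := ∀ x y, |f x - f y| ≤ d x y

/-- Integral of `f` against a probability mass function `μ`. -/
def integ (μ f : S → ℝ) : ℝ := ∑' x, μ x * f x

/-- Wasserstein (dual Lipschitz) distance between two pmfs on `S`. -/
def dW (d : S → S → ℝ) (μ ν : S → ℝ) : ℝ :=
  sSup {r | ∃ f, IsLip d f ∧ r = |integ μ f - integ ν f|}

/-- One step of the kernel `P` applied to a pmf `μ`. -/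
def step (P : S → S → ℝ) (μ : S → ℝ) : S → ℝ := fun y => ∑' x, μ x * P x y

/-- `t` steps of the kernel `P`. -/
def kpow (P : S → S → ℝ) (t : ℕ) (μ : S → ℝ) : S → ℝ := (step P)^[t] μ

/-- Dirac mass at `x`. -/
def delta (x : S) : S → ℝ := fun y => if y = x then 1 else 0

/-- Probability of an event under a pmf. -/
def pr (μ : S → ℝ) (A : S → Prop) : ℝ := ∑' x, if A x then μ x else 0

/-- Probability of a path event for the chain with kernel `P` started at `x0`,
run for `t` steps. -/
def pathProb (P : S → S → ℝ) (x0 : S) (t : ℕ)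
    (E : (Fin (t + 1) → S) → Prop) : ℝ :=
  ∑' ω : Fin (t + 1) → S,
    if ω 0 = x0 ∧ E ω then ∏ i : Fin t, P (ω i.castSucc) (ω i.succ) else 0

/-- `P` is a stochastic matrix. -/
def IsStochastic (P : S → S → ℝ) : Prop :=
  (∀ x y, 0 ≤ P x y) ∧ ∀ x, HasSum (P x) 1

/-- `d` is a graph-type metric: zero on the diagonal, symmetric, satisfies
the triangle inequality, and is at least 1 off the diagonal. -/
def IsGraphMetric (d : S → S → ℝ) : Prop :=
  (∀ x, d x x = 0) ∧ (∀ x y, d x y = d y x) ∧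
  (∀ x y z, d x z ≤ d x y + d y z) ∧ (∀ x y, x ≠ y → 1 ≤ d x y)

/-- The transition graph of `P` is locally finite. -/
def LocFin (P : S → S → ℝ) : Prop := ∀ x, {y | 0 < P x y}.Finite

/-- The spin value of a Boolean configuration entry. -/
def spin (b : Bool) : ℝ := if b then 1 else -1

/-- The Curie-Weiss Gibbs measure at inverse temperature `β` on `{-1,1}^n`
(configurations encoded as `Fin n → Bool`), with interaction `J = 1/n`. -/
def gibbs (n : ℕ) (β : ℝ) (σ : Fin n → Bool) : ℝ :=
  Real.exp ((β / n) * ∑ p ∈ Finset.univ.filter (fun p : Fin n × Fin n => p.1 < p.2),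
      spin (σ p.1) * spin (σ p.2)) /
    ∑ τ : Fin n → Bool,
      Real.exp ((β / n) * ∑ p ∈ Finset.univ.filter (fun p : Fin n × Fin n => p.1 < p.2),
        spin (τ p.1) * spin (τ p.2))

/-- Probability that Glauber dynamics resamples the spin at `v` to `+1`. -/
def pPlus (n : ℕ) (β : ℝ) (σ : Fin n → Bool) (v : Fin n) : ℝ :=
  Real.exp (β * ((1 / (n : ℝ)) * ∑ w ∈ Finset.univ.erase v, spin (σ w))) /
    (Real.exp (β * ((1 / (n : ℝ)) * ∑ w ∈ Finset.univ.erase v, spin (σ w))) +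
      Real.exp (-(β * ((1 / (n : ℝ)) * ∑ w ∈ Finset.univ.erase v, spin (σ w)))))

/-- The single-site Glauber dynamics transition matrix for the Curie-Weiss model. -/
def glauber (n : ℕ) (β : ℝ) (σ τ : Fin n → Bool) : ℝ :=
  (1 / n) * ∑ v : Fin n,
    if ∀ w, w ≠ v → τ w = σ w then
      (if τ v then pPlus n β σ v else 1 - pPlus n β σ v)
    else 0

/-!
For `β < 1` the Glauber kernel `P` contracts Hamming-Lipschitz constants by
`α = 1 - (1 - β) / n`. For neighbours `σ, σ'` differing at `j`, resampling `j` gives the same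
law from both, while resampling another site `v` costs at most `(1 + β / n) L`, because the
probability of a `+` spin is a `1/4`-Lipschitz sigmoid of a local field that moves by `2 / n`.
Averaging over the `n` sites gives `(n - 1)(1 + β / n) / n ≤ α`; by duality this is the
Wasserstein contraction.

Each step of the chain changes at most one spin, so Hoeffding's lemma gives
`P e^{l g} ≤ e^{l P g + 2 L² l²}`. Iterating with the contracted constants `α^t L` and averaging
against the reversible, hence stationary, Gibbs measure `μ` gives
`μ e^{l (f - μ f)} ≤ e^{2 l² ∑ α^{2i}}` with `∑ α^{2i} ≤ 1 / (1 - α²) ≤ n / (1 - β)`, and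
Chernoff's bound turns this into a Gaussian tail at scale `√n`.
-/

open Finset Real Matrix Function

def IsLipWith (d : S → S → ℝ) (L : ℝ) (f : S → ℝ) : Prop := ∀ x y, |f x - f y| ≤ L * d x y

lemma isLip_iff_isLipWith_one {d : S → S → ℝ} {f : S → ℝ} : IsLip d f ↔ IsLipWith d 1 f := by
  simp only [IsLip, IsLipWith, one_mul]

lemma exp_mul_le_cosh_add_div_mul_sinh {c w : ℝ} (hw : |w| ≤ c) (l : ℝ) :
    exp (l * w) ≤ cosh (l * c) + w / c * sinh (l * c) := by
  rcases (abs_nonneg w).trans hw |>.eq_or_lt with hc | hc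
  · obtain rfl : w = 0 := abs_nonpos_iff.1 (hc ▸ hw)
    simp [← hc]
  -- `exp` lies below its chord over `[-l c, l c]`
  have hw' := abs_le.1 hw
  have hconv := convexOn_exp.2 (Set.mem_univ (-(l * c))) (Set.mem_univ (l * c))
    (div_nonneg (sub_nonneg.2 hw'.2) (by positivity : (0:ℝ) ≤ 2 * c))
    (div_nonneg (neg_le_iff_add_nonneg.1 hw'.1) (by positivity : (0:ℝ) ≤ 2 * c))
    (by field_simp; ring)
  simp only [smul_eq_mul] at hconv
  have hcomb : (c - w) / (2 * c) * -(l * c) + (w + c) / (2 * c) * (l * c) = l * w := by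
    field_simp; ring
  rw [hcomb] at hconv
  refine hconv.trans_eq ?_
  rw [cosh_eq, sinh_eq]; field_simp; ring

lemma abs_sigmoid_sub_sigmoid_le (a b : ℝ) : |sigmoid a - sigmoid b| ≤ |a - b| / 4 := by
  have hlip : LipschitzWith 4⁻¹ sigmoid := lipschitzWith_of_nnnorm_deriv_le differentiable_sigmoid
    fun x => by
      have h0 : 0 ≤ sigmoid x * (1 - sigmoid x) :=
        mul_nonneg (sigmoid_nonneg x) (sub_nonneg.2 (sigmoid_le_one x))
      rw [← NNReal.coe_le_coe, coe_nnnorm, deriv_sigmoid, Real.norm_eq_abs, abs_of_nonneg h0]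
      push_cast
      nlinarith [sq_nonneg (sigmoid x - 1 / 2)]
  simpa [Real.dist_eq, div_eq_inv_mul] using hlip.dist_le_mul a b

lemma abs_convexComb_sub_convexComb_le {p q a₀ a₁ b₀ b₁ L δ : ℝ} (hp0 : 0 ≤ p) (hp1 : p ≤ 1)
    (hpq : |p - q| ≤ δ) (h₁ : |a₁ - b₁| ≤ L) (h₀ : |a₀ - b₀| ≤ L) (hb : |b₁ - b₀| ≤ L) :
    |p * a₁ + (1 - p) * a₀ - (q * b₁ + (1 - q) * b₀)| ≤ (1 + δ) * L := by
  have hδ : 0 ≤ δ := (abs_nonneg _).trans hpq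
  calc |p * a₁ + (1 - p) * a₀ - (q * b₁ + (1 - q) * b₀)|
      = |p * (a₁ - b₁) + (1 - p) * (a₀ - b₀) + (p - q) * (b₁ - b₀)| := by ring_nf
    _ ≤ p * L + (1 - p) * L + δ * L := by
      refine (abs_add_three _ _ _).trans (add_le_add (add_le_add ?_ ?_) ?_) <;> rw [abs_mul]
      · rw [abs_of_nonneg hp0]; gcongr
      · rw [abs_of_nonneg (sub_nonneg.2 hp1)]; gcongr
      · exact mul_le_mul hpq hb (abs_nonneg _) hδ
    _ = (1 + δ) * L := by ring

section Kernel

variable [Fintype S]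

lemma integ_eq_dotProduct (μ f : S → ℝ) : integ μ f = μ ⬝ᵥ f := tsum_fintype _

lemma pr_eq_sum (μ : S → ℝ) (A : S → Prop) : pr μ A = ∑ x, if A x then μ x else 0 :=
  tsum_fintype _

lemma integ_step_delta (P : Matrix S S ℝ) (x : S) (f : S → ℝ) :
    integ (step P (delta x)) f = (P *ᵥ f) x := by
  simp [integ, step, delta, tsum_fintype, mulVec, dotProduct]

lemma abs_dotProduct_sub_le {p a : S → ℝ} (hp : ∀ y, 0 ≤ p y) (hp1 : ∑ y, p y = 1) {b B : ℝ}
    (h : ∀ y, p y ≠ 0 → |a y - b| ≤ B) : |p ⬝ᵥ a - b| ≤ B := by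
  have hsum : p ⬝ᵥ a - b = ∑ y, p y * (a y - b) := by
    simp only [dotProduct, mul_sub, sum_sub_distrib, ← sum_mul, hp1, one_mul]
  calc |p ⬝ᵥ a - b| ≤ ∑ y, p y * |a y - b| := by
        rw [hsum]
        refine (abs_sum_le_sum_abs _ _).trans_eq (sum_congr rfl fun y _ => ?_)
        rw [abs_mul, abs_of_nonneg (hp y)]
    _ ≤ ∑ y, p y * B := sum_le_sum fun y _ => by
        rcases eq_or_ne (p y) 0 with hy | hy
        · simp [hy]
        · exact mul_le_mul_of_nonneg_left (h y hy) (hp y)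
    _ = B := by rw [← sum_mul, hp1, one_mul]

lemma sum_mul_exp_le_of_abs_sub_le {p a : S → ℝ} (hp : ∀ y, 0 ≤ p y) (hp1 : ∑ y, p y = 1)
    {c : ℝ} (ha : ∀ y, p y ≠ 0 → |a y - p ⬝ᵥ a| ≤ c) (l : ℝ) :
    ∑ y, p y * exp (l * a y) ≤ exp (l * (p ⬝ᵥ a) + c ^ 2 * l ^ 2 / 2) := by
  set m := p ⬝ᵥ a
  have hcentre : ∑ y, p y * (a y - m) = 0 := by
    simp only [mul_sub, sum_sub_distrib, ← sum_mul, hp1, one_mul]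
    exact sub_self m
  have hpt : ∀ y, p y * exp (l * a y) ≤
      exp (l * m) * (p y * cosh (l * c) + sinh (l * c) / c * (p y * (a y - m))) := by
    intro y
    rcases eq_or_ne (p y) 0 with hy | hy
    · simp [hy]
    calc p y * exp (l * a y) = exp (l * m) * (p y * exp (l * (a y - m))) := by
          rw [mul_left_comm, ← exp_add]; ring_nf
      _ ≤ exp (l * m) * (p y * (cosh (l * c) + (a y - m) / c * sinh (l * c))) := by
          gcongr
          · exact hp y
          · exact exp_mul_le_cosh_add_div_mul_sinh (ha y hy) l
      _ = _ := by ring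
  calc ∑ y, p y * exp (l * a y)
      ≤ ∑ y, exp (l * m) * (p y * cosh (l * c) + sinh (l * c) / c * (p y * (a y - m))) :=
        sum_le_sum fun y _ => hpt y
    _ = exp (l * m) * cosh (l * c) := by
        rw [← mul_sum, sum_add_distrib, ← sum_mul, ← mul_sum, hp1, hcentre]; ring
    _ ≤ exp (l * m) * exp ((l * c) ^ 2 / 2) := by gcongr; exact cosh_le_exp_half_sq _
    _ = exp (l * m + c ^ 2 * l ^ 2 / 2) := by rw [← exp_add]; ring_nf

lemma sum_ite_le_abs_le_two_mul_exp {μ h : S → ℝ} (hμ : ∀ x, 0 ≤ μ x) {v : ℝ} (hv : 0 < v)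
    (hmgf : ∀ l, ∑ x, μ x * exp (l * h x) ≤ exp (v * l ^ 2 / 2)) {u : ℝ} (hu : 0 ≤ u) :
    ∑ x, (if u ≤ |h x| then μ x else 0) ≤ 2 * exp (-u ^ 2 / (2 * v)) := by
  set l := u / v
  have hl : 0 ≤ l := div_nonneg hu hv.le
  have hpt (x : S) : (if u ≤ |h x| then μ x else 0) ≤
      exp (-(l * u)) * (μ x * exp (l * h x) + μ x * exp (-l * h x)) := by
    split_ifs with hx
    · have h1 : 1 ≤ exp (-(l * u)) * exp (l * h x) + exp (-(l * u)) * exp (-l * h x) := by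
        rw [← exp_add, ← exp_add]
        rcases le_abs.1 hx with hx | hx
        · linarith [one_le_exp (show 0 ≤ -(l * u) + l * h x by nlinarith),
            exp_pos (-(l * u) + -l * h x)]
        · linarith [one_le_exp (show 0 ≤ -(l * u) + -l * h x by nlinarith),
            exp_pos (-(l * u) + l * h x)]
      calc μ x = μ x * 1 := (mul_one _).symm
        _ ≤ μ x * (exp (-(l * u)) * exp (l * h x) + exp (-(l * u)) * exp (-l * h x)) := by
          gcongr; exact hμ x
        _ = _ := by ring
    · have := hμ x
      positivity
  calc ∑ x, (if u ≤ |h x| then μ x else 0)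
      ≤ ∑ x, exp (-(l * u)) * (μ x * exp (l * h x) + μ x * exp (-l * h x)) :=
        sum_le_sum fun x _ => hpt x
    _ = exp (-(l * u)) * (∑ x, μ x * exp (l * h x) + ∑ x, μ x * exp (-l * h x)) := by
        rw [← mul_sum, sum_add_distrib]
    _ ≤ exp (-(l * u)) * (exp (v * l ^ 2 / 2) + exp (v * (-l) ^ 2 / 2)) := by
        gcongr
        exacts [hmgf l, hmgf (-l)]
    _ = 2 * exp (-u ^ 2 / (2 * v)) := by
        rw [neg_sq, ← two_mul, mul_left_comm, ← exp_add]
        congr 2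
        simp only [l]
        field_simp
        ring

lemma IsStochastic.sum_eq_one {P : Matrix S S ℝ} (hP : IsStochastic P) (x : S) :
    ∑ y, P x y = 1 :=
  (hasSum_fintype (P x)).unique (hP.2 x)

lemma Matrix.mulVec_mono_of_nonneg {P : Matrix S S ℝ} (hP : ∀ x y, 0 ≤ P x y) {v w : S → ℝ}
    (h : v ≤ w) : P *ᵥ v ≤ P *ᵥ w :=
  fun x => sum_le_sum fun y _ => mul_le_mul_of_nonneg_left (h y) (hP x y)

def ContractsLip (d : S → S → ℝ) (P : Matrix S S ℝ) (α : ℝ) : Prop :=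
  ∀ L g, 0 ≤ L → IsLipWith d L g → IsLipWith d (α * L) (P *ᵥ g)

variable {d : S → S → ℝ} {P : Matrix S S ℝ} {α : ℝ}

lemma dW_step_delta_le (hP : ContractsLip d P α) (hα : 0 ≤ α) {x y : S} (hxy : 0 ≤ d x y) :
    dW d (step P (delta x)) (step P (delta y)) ≤ α * d x y := by
  refine Real.sSup_le ?_ (mul_nonneg hα hxy)
  rintro _ ⟨f, hf, rfl⟩
  rw [integ_step_delta, integ_step_delta]
  simpa using hP 1 f zero_le_one (isLip_iff_isLipWith_one.1 hf) x y

lemma IsStochastic.mulVec_exp_le (hP : IsStochastic P) (hjump : ∀ x y, P x y ≠ 0 → d x y ≤ 1)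
    {L : ℝ} (hL : 0 ≤ L) {g : S → ℝ} (hg : IsLipWith d L g) (l : ℝ) (x : S) :
    (P *ᵥ fun y => exp (l * g y)) x ≤ exp (l * (P *ᵥ g) x + 2 * L ^ 2 * l ^ 2) := by
  have hnear : ∀ y, P x y ≠ 0 → |g y - g x| ≤ L := fun y hy => by
    rw [abs_sub_comm]
    exact (hg x y).trans (mul_le_of_le_one_right hL (hjump x y hy))
  have hmean : |(P *ᵥ g) x - g x| ≤ L := abs_dotProduct_sub_le (hP.1 x) (hP.sum_eq_one x) hnear
  have hspread : ∀ y, P x y ≠ 0 → |g y - (P *ᵥ g) x| ≤ 2 * L := fun y hy => by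
    calc |g y - (P *ᵥ g) x| ≤ |g y - g x| + |g x - (P *ᵥ g) x| := abs_sub_le _ _ _
      _ ≤ 2 * L := by rw [abs_sub_comm (g x)]; linarith [hnear y hy]
  calc (P *ᵥ fun y => exp (l * g y)) x
      ≤ exp (l * (P *ᵥ g) x + (2 * L) ^ 2 * l ^ 2 / 2) :=
        sum_mul_exp_le_of_abs_sub_le (hP.1 x) (hP.sum_eq_one x) hspread l
    _ = exp (l * (P *ᵥ g) x + 2 * L ^ 2 * l ^ 2) := by ring_nf

lemma vecMul_eq_self_of_detailed_balance (hP : IsStochastic P) {μ : S → ℝ}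
    (hrev : ∀ x y, μ x * P x y = μ y * P y x) : μ ᵥ* P = μ := funext fun y => by
  simp only [vecMul, dotProduct, hrev _ y, ← mul_sum, hP.sum_eq_one, mul_one]

variable [DecidableEq S]

lemma ContractsLip.pow_mulVec (hP : ContractsLip d P α) (hα : 0 ≤ α) {L : ℝ} (hL : 0 ≤ L)
    {g : S → ℝ} (hg : IsLipWith d L g) (t : ℕ) : IsLipWith d (α ^ t * L) (P ^ t *ᵥ g) := by
  induction t with
  | zero => simpa using hg
  | succ t ih =>
    rw [pow_succ', pow_succ', ← mulVec_mulVec, mul_assoc]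
    exact hP _ _ (by positivity) ih

lemma IsStochastic.pow_mulVec_exp_le (hP : IsStochastic P)
    (hjump : ∀ x y, P x y ≠ 0 → d x y ≤ 1) (hcontr : ContractsLip d P α) (hα : 0 ≤ α)
    {L : ℝ} (hL : 0 ≤ L) {g : S → ℝ} (hg : IsLipWith d L g) (l : ℝ) (t : ℕ) (x : S) :
    (P ^ t *ᵥ fun y => exp (l * g y)) x ≤
      exp (l * (P ^ t *ᵥ g) x + 2 * L ^ 2 * l ^ 2 * ∑ i ∈ range t, (α ^ 2) ^ i) := by
  induction t generalizing x with
  | zero => simp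
  | succ t ih =>
    set c := 2 * L ^ 2 * l ^ 2 * ∑ i ∈ range t, (α ^ 2) ^ i
    have hlip := hcontr.pow_mulVec hα hL hg t
    calc (P ^ (t + 1) *ᵥ fun y => exp (l * g y)) x
        = (P *ᵥ (P ^ t *ᵥ fun y => exp (l * g y))) x := by rw [pow_succ', ← mulVec_mulVec]
      _ ≤ (P *ᵥ (exp c • fun y => exp (l * (P ^ t *ᵥ g) y))) x :=
          mulVec_mono_of_nonneg hP.1 (fun y => by simpa [← exp_add, add_comm] using ih y) x
      _ = exp c * (P *ᵥ fun y => exp (l * (P ^ t *ᵥ g) y)) x := by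
          rw [mulVec_smul, Pi.smul_apply, smul_eq_mul]
      _ ≤ exp c * exp (l * (P *ᵥ (P ^ t *ᵥ g)) x + 2 * (α ^ t * L) ^ 2 * l ^ 2) := by
          gcongr
          exact hP.mulVec_exp_le hjump (by positivity) hlip l x
      _ = exp (l * (P ^ (t + 1) *ᵥ g) x +
            2 * L ^ 2 * l ^ 2 * ∑ i ∈ range (t + 1), (α ^ 2) ^ i) := by
          rw [← exp_add, pow_succ' P, ← mulVec_mulVec, sum_range_succ]
          congr 1
          simp only [c]
          ring

lemma vecMul_pow_eq_self {μ : S → ℝ} (hμP : μ ᵥ* P = μ) (t : ℕ) : μ ᵥ* P ^ t = μ := by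
  induction t with
  | zero => simp
  | succ t ih => rw [pow_succ, ← vecMul_vecMul, ih, hμP]

lemma sum_mul_exp_le_of_contractsLip (hP : IsStochastic P)
    (hjump : ∀ x y, P x y ≠ 0 → d x y ≤ 1) (hcontr : ContractsLip d P α) (hα0 : 0 ≤ α)
    (hα1 : α < 1) {μ : S → ℝ} (hμ0 : ∀ x, 0 ≤ μ x) (hμ1 : ∑ x, μ x = 1) (hμP : μ ᵥ* P = μ)
    {g : S → ℝ} (hg : IsLipWith d 1 g) (hg0 : μ ⬝ᵥ g = 0) (l : ℝ) :
    ∑ x, μ x * exp (l * g x) ≤ exp (4 / (1 - α ^ 2) * l ^ 2 / 2) := by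
  obtain ⟨D, hD⟩ := Finite.exists_le (uncurry d)
  have hgeom (t : ℕ) :
      2 * 1 ^ 2 * l ^ 2 * ∑ i ∈ range t, (α ^ 2) ^ i ≤ 4 / (1 - α ^ 2) * l ^ 2 / 2 := by
    have h := geom_sum_Ico_le_of_lt_one (m := 0) (n := t) (sq_nonneg α)
      (pow_lt_one₀ hα0 hα1 two_ne_zero)
    rw [← range_eq_Ico, pow_zero] at h
    calc 2 * 1 ^ 2 * l ^ 2 * ∑ i ∈ range t, (α ^ 2) ^ i
        ≤ 2 * 1 ^ 2 * l ^ 2 * (1 / (1 - α ^ 2)) := by gcongr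
      _ = 4 / (1 - α ^ 2) * l ^ 2 / 2 := by ring
  -- `P ^ t` maps `g` to a function of oscillation `O(α ^ t)` around the mean `μ ⬝ᵥ g = 0`
  have hbound (t : ℕ) :
      ∑ x, μ x * exp (l * g x) ≤ exp (4 / (1 - α ^ 2) * l ^ 2 / 2 + |l| * (α ^ t * D)) := by
    have hlip := hcontr.pow_mulVec hα0 zero_le_one hg t
    have hosc (x : S) : |(P ^ t *ᵥ g) x| ≤ α ^ t * D := by
      have h := abs_dotProduct_sub_le hμ0 hμ1 (a := P ^ t *ᵥ g) (b := (P ^ t *ᵥ g) x)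
        (B := α ^ t * D) fun y _ => (hlip y x).trans <| by
          rw [mul_one]; exact mul_le_mul_of_nonneg_left (hD (y, x)) (pow_nonneg hα0 t)
      rwa [dotProduct_mulVec, vecMul_pow_eq_self hμP, hg0, zero_sub, abs_neg] at h
    have hpt (x : S) : (P ^ t *ᵥ fun y => exp (l * g y)) x ≤
        exp (4 / (1 - α ^ 2) * l ^ 2 / 2 + |l| * (α ^ t * D)) := by
      refine (hP.pow_mulVec_exp_le hjump hcontr hα0 zero_le_one hg l t x).trans ?_
      gcongr exp ?_
      have : l * (P ^ t *ᵥ g) x ≤ |l| * (α ^ t * D) := by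
        calc l * (P ^ t *ᵥ g) x ≤ |l * (P ^ t *ᵥ g) x| := le_abs_self _
          _ = |l| * |(P ^ t *ᵥ g) x| := abs_mul _ _
          _ ≤ |l| * (α ^ t * D) := by gcongr; exact hosc x
      linarith [hgeom t]
    calc ∑ x, μ x * exp (l * g x) = μ ⬝ᵥ (P ^ t *ᵥ fun y => exp (l * g y)) := by
          rw [dotProduct_mulVec, vecMul_pow_eq_self hμP]; rfl
      _ ≤ ∑ x, μ x * exp (4 / (1 - α ^ 2) * l ^ 2 / 2 + |l| * (α ^ t * D)) :=
          sum_le_sum fun x _ => mul_le_mul_of_nonneg_left (hpt x) (hμ0 x)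
      _ = _ := by rw [← sum_mul, hμ1, one_mul]
  have hlim : Tendsto (fun t : ℕ => exp (4 / (1 - α ^ 2) * l ^ 2 / 2 + |l| * (α ^ t * D))) atTop
      (nhds (exp (4 / (1 - α ^ 2) * l ^ 2 / 2 + |l| * (0 * D)))) :=
    (((tendsto_pow_atTop_nhds_zero_of_lt_one hα0 hα1).mul_const D).const_mul |l|
      |>.const_add _).rexp
  simpa using ge_of_tendsto' hlim hbound

theorem pr_le_abs_sub_integ_le (hP : IsStochastic P)
    (hjump : ∀ x y, P x y ≠ 0 → d x y ≤ 1) (hcontr : ContractsLip d P α) (hα0 : 0 ≤ α)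
    (hα1 : α < 1) {μ : S → ℝ} (hμ0 : ∀ x, 0 ≤ μ x) (hμ1 : ∑ x, μ x = 1) (hμP : μ ᵥ* P = μ)
    {f : S → ℝ} (hf : IsLip d f) {u : ℝ} (hu : 0 ≤ u) :
    pr μ (fun x => u ≤ |f x - integ μ f|) ≤ 2 * exp (-u ^ 2 / (8 / (1 - α ^ 2))) := by
  have hα2 : 0 < 1 - α ^ 2 := sub_pos.2 (pow_lt_one₀ hα0 hα1 two_ne_zero)
  set g := fun x => f x - μ ⬝ᵥ f
  have hg : IsLipWith d 1 g := fun x y => by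
    simpa [g] using isLip_iff_isLipWith_one.1 hf x y
  have hg0 : μ ⬝ᵥ g = 0 := by
    simp only [g, dotProduct, mul_sub, sum_sub_distrib, ← sum_mul, hμ1, one_mul, sub_self]
  rw [pr_eq_sum, integ_eq_dotProduct]
  convert sum_ite_le_abs_le_two_mul_exp hμ0 (by positivity)
    (sum_mul_exp_le_of_contractsLip hP hjump hcontr hα0 hα1 hμ0 hμ1 hμP hg hg0) hu using 4
  ring

end Kernel

section Hamming

variable {ι : Type*} [Fintype ι] {β : ι → Type*} [∀ i, DecidableEq (β i)]

lemma exists_eq_off_of_hammingDist_eq_one {x y : ∀ i, β i} (h : hammingDist x y = 1) :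
    ∃ j, ∀ i, i ≠ j → x i = y i := by
  obtain ⟨j, hj⟩ := card_eq_one.1 h
  refine ⟨j, fun i hij => not_not.1 fun hxy => hij ?_⟩
  have hi : i ∈ ({i | x i ≠ y i} : Finset ι) := by simpa using hxy
  simpa [hammingDist, hj] using hi

variable [DecidableEq ι]

lemma hammingDist_le_one_of_eq_off {x y : ∀ i, β i} {j : ι} (h : ∀ i, i ≠ j → x i = y i) :
    hammingDist x y ≤ 1 := by
  refine (card_le_card fun i hi => mem_singleton.2 ?_).trans (card_singleton j).le
  by_contra hij
  exact (mem_filter.1 hi).2 (h i hij)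

lemma hammingDist_update_self {x : ∀ i, β i} {j : ι} {b : β j} (h : x j ≠ b) :
    hammingDist x (update x j b) = 1 := by
  refine le_antisymm (hammingDist_le_one_of_eq_off fun i hi => (update_of_ne hi _ _).symm) ?_
  exact hammingDist_pos.2 fun hx => h (by rw [hx, update_self])

lemma hammingDist_update_lt {x y : ∀ i, β i} {j : ι} (h : x j ≠ y j) :
    hammingDist (update x j (y j)) y < hammingDist x y := by
  refine card_lt_card ⟨fun i hi => ?_, fun hsub => ?_⟩
  · simp only [mem_filter, mem_univ, true_and] at hi ⊢
    rcases eq_or_ne i j with rfl | hij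
    · simp at hi
    · rwa [update_of_ne hij] at hi
  · simpa using hsub (mem_filter.2 ⟨mem_univ j, h⟩)

lemma abs_sub_le_mul_hammingDist {g : (∀ i, β i) → ℝ} {K : ℝ} (hK : 0 ≤ K)
    (h : ∀ x y, hammingDist x y = 1 → |g x - g y| ≤ K) (x y : ∀ i, β i) :
    |g x - g y| ≤ K * hammingDist x y := by
  induction hxy : hammingDist x y using Nat.strong_induction_on generalizing x with
  | _ k ih =>
    rcases eq_or_ne x y with rfl | hne
    · simp [← hxy]
    obtain ⟨j, hj⟩ := Function.ne_iff.1 hne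
    have hlt := hammingDist_update_lt hj
    calc |g x - g y| ≤ |g x - g (update x j (y j))| + |g (update x j (y j)) - g y| :=
          abs_sub_le _ _ _
      _ ≤ K + K * hammingDist (update x j (y j)) y :=
          add_le_add (h _ _ (hammingDist_update_self hj)) (ih _ (hxy ▸ hlt) _ rfl)
      _ ≤ K * k := by
          rw [← hxy]
          have : (hammingDist (update x j (y j)) y : ℝ) + 1 ≤ hammingDist x y := by
            exact_mod_cast hlt
          nlinarith

end Hamming

namespace CurieWeiss

variable {n : ℕ} {β : ℝ}

lemma spin_mul_self (b : Bool) : spin b * spin b = 1 := by cases b <;> norm_num [spin]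

lemma abs_spin_sub_le (a b : Bool) : |spin a - spin b| ≤ 2 := by
  cases a <;> cases b <;> norm_num [spin]

def localField (σ : Fin n → Bool) (v : Fin n) : ℝ := ∑ w ∈ univ.erase v, spin (σ w)

lemma pPlus_eq_sigmoid (σ : Fin n → Bool) (v : Fin n) :
    pPlus n β σ v = sigmoid (2 * (β * (1 / n * localField σ v))) := by
  set x := β * (1 / n * localField σ v)
  have hx : exp x * exp (-x) = 1 := by rw [← exp_add, add_neg_cancel, exp_zero]
  rw [sigmoid_def, show -(2 * x) = -x + -x by ring, exp_add]
  change exp x / (exp x + exp (-x)) = _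
  field_simp
  linear_combination exp (-x) * hx

lemma pPlus_nonneg (σ : Fin n → Bool) (v : Fin n) : 0 ≤ pPlus n β σ v := by
  rw [pPlus_eq_sigmoid]; exact sigmoid_nonneg _

lemma pPlus_le_one (σ : Fin n → Bool) (v : Fin n) : pPlus n β σ v ≤ 1 := by
  rw [pPlus_eq_sigmoid]; exact sigmoid_le_one _

lemma localField_eq_of_eq_off {σ τ : Fin n → Bool} {v : Fin n} (h : ∀ w, w ≠ v → σ w = τ w) :
    localField σ v = localField τ v :=
  sum_congr rfl fun w hw => by rw [h w (ne_of_mem_erase hw)]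

lemma localField_sub_localField {σ σ' : Fin n → Bool} {j v : Fin n}
    (h : ∀ w, w ≠ j → σ w = σ' w) (hv : v ≠ j) :
    localField σ v - localField σ' v = spin (σ j) - spin (σ' j) := by
  rw [localField, localField, ← sum_sub_distrib,
    sum_eq_single_of_mem j (mem_erase.2 ⟨hv.symm, mem_univ j⟩)]
  intro w _ hw
  rw [h w hw, sub_self]

lemma abs_pPlus_sub_pPlus_le (hβ : 0 ≤ β) {σ σ' : Fin n → Bool} {j v : Fin n}
    (h : ∀ w, w ≠ j → σ w = σ' w) (hv : v ≠ j) :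
    |pPlus n β σ v - pPlus n β σ' v| ≤ β / n := by
  rw [pPlus_eq_sigmoid, pPlus_eq_sigmoid]
  refine (abs_sigmoid_sub_sigmoid_le _ _).trans ?_
  have hdiff : 2 * (β * (1 / n * localField σ v)) - 2 * (β * (1 / n * localField σ' v)) =
      2 * (β / n) * (spin (σ j) - spin (σ' j)) := by
    rw [← localField_sub_localField h hv]; ring
  rw [hdiff, abs_mul, abs_of_nonneg (by positivity)]
  nlinarith [abs_spin_sub_le (σ j) (σ' j), (by positivity : 0 ≤ β / n)]

lemma glauber_mulVec (f : (Fin n → Bool) → ℝ) (σ : Fin n → Bool) :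
    (glauber n β *ᵥ f) σ = (∑ v, (pPlus n β σ v * f (update σ v true) +
      (1 - pPlus n β σ v) * f (update σ v false))) / n := by
  have hsite (v : Fin n) (τ : Fin n → Bool) :
      (if ∀ w, w ≠ v → τ w = σ w then
        (if τ v then pPlus n β σ v else 1 - pPlus n β σ v) else 0) * f τ =
      ∑ b : Bool, if τ = update σ v b then
        (if b then pPlus n β σ v else 1 - pPlus n β σ v) * f (update σ v b) else 0 := by
    simp only [eq_update_iff, ite_and, sum_ite_eq, mem_univ, if_true]
    by_cases h : ∀ w, w ≠ v → τ w = σ w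
    · simp only [if_pos h]
      rw [← eq_update_iff.2 ⟨rfl, h⟩]
    · simp [h]
  simp only [mulVec, dotProduct, glauber, mul_sum, sum_mul, div_eq_inv_mul]
  rw [sum_comm]
  refine sum_congr rfl fun v _ => ?_
  simp_rw [mul_assoc, ← mul_sum, hsite v]
  rw [sum_comm]
  simp

lemma glauber_nonneg (σ τ : Fin n → Bool) : 0 ≤ glauber n β σ τ := by
  unfold glauber
  refine mul_nonneg (by positivity) (sum_nonneg fun v _ => ?_)
  split_ifs
  exacts [pPlus_nonneg σ v, sub_nonneg.2 (pPlus_le_one σ v), le_rfl]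

lemma sum_glauber (hn : 0 < n) (σ : Fin n → Bool) : ∑ τ, glauber n β σ τ = 1 := by
  simpa [mulVec, dotProduct, hn.ne'] using glauber_mulVec (β := β) (fun _ => 1) σ

lemma isStochastic_glauber (hn : 0 < n) : IsStochastic (glauber n β) :=
  ⟨glauber_nonneg, fun σ => sum_glauber (β := β) hn σ ▸ hasSum_fintype _⟩

lemma hammingDist_le_one_of_glauber_ne_zero {σ τ : Fin n → Bool} (h : glauber n β σ τ ≠ 0) :
    (hammingDist σ τ : ℝ) ≤ 1 := by
  obtain ⟨v, -, hv⟩ := exists_ne_zero_of_sum_ne_zero (right_ne_zero_of_mul h)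
  have hoff : ∀ w, w ≠ v → τ w = σ w := not_not.1 fun hc => hv (if_neg hc)
  rw [hammingDist_comm]
  exact_mod_cast hammingDist_le_one_of_eq_off hoff

lemma abs_glauber_mulVec_sub_le (hn : 0 < n) (hβ : 0 ≤ β) {L : ℝ} (hL : 0 ≤ L)
    {g : (Fin n → Bool) → ℝ} (hg : IsLipWith (fun a b => (hammingDist a b : ℝ)) L g)
    {σ σ' : Fin n → Bool} (h1 : hammingDist σ σ' = 1) :
    |(glauber n β *ᵥ g) σ - (glauber n β *ᵥ g) σ'| ≤ (1 - (1 - β) / n) * L := by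
  obtain ⟨j, hj⟩ := exists_eq_off_of_hammingDist_eq_one h1
  have hnear {x y : Fin n → Bool} {k : Fin n} (hxy : ∀ w, w ≠ k → x w = y w) :
      |g x - g y| ≤ L :=
    (hg x y).trans <| mul_le_of_le_one_right hL <| show (hammingDist x y : ℝ) ≤ 1 by
      exact_mod_cast hammingDist_le_one_of_eq_off hxy
  have hupd (v : Fin n) (b : Bool) : ∀ w, w ≠ j → update σ v b w = update σ' v b w := fun w hw => by
    rcases eq_or_ne w v with rfl | hwv
    · simp
    · simp [update_of_ne hwv, hj w hw]
  set D : Fin n → ℝ := fun v => pPlus n β σ v * g (update σ v true) +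
    (1 - pPlus n β σ v) * g (update σ v false) -
    (pPlus n β σ' v * g (update σ' v true) + (1 - pPlus n β σ' v) * g (update σ' v false))
  -- resampling the site where `σ` and `σ'` differ gives the same law from both
  have hDj : D j = 0 := by
    have hp : pPlus n β σ j = pPlus n β σ' j := by
      rw [pPlus_eq_sigmoid, pPlus_eq_sigmoid, localField_eq_of_eq_off hj]
    have hu (b : Bool) : update σ j b = update σ' j b := funext fun w => by
      rcases eq_or_ne w j with rfl | hw
      · simp
      · exact hupd j b w hw
    simp only [D, hp, hu, sub_self]
  have hD (v : Fin n) (hv : v ≠ j) : |D v| ≤ (1 + β / n) * L :=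
    abs_convexComb_sub_convexComb_le (pPlus_nonneg σ v) (pPlus_le_one σ v)
      (abs_pPlus_sub_pPlus_le hβ hj hv) (hnear (hupd v true)) (hnear (hupd v false))
      (hnear (k := v) fun w hw => by simp [update_of_ne hw])
  have hn' : (0 : ℝ) < n := Nat.cast_pos.2 hn
  calc |(glauber n β *ᵥ g) σ - (glauber n β *ᵥ g) σ'|
      = |∑ v ∈ univ.erase j, D v| / n := by
        rw [glauber_mulVec, glauber_mulVec, ← sub_div, ← sum_sub_distrib, sum_erase _ hDj,
          abs_div, Nat.abs_cast]
    _ ≤ (∑ v ∈ univ.erase j, (1 + β / n) * L) / n := by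
        gcongr
        exact (abs_sum_le_sum_abs _ _).trans (sum_le_sum fun v hv => hD v (ne_of_mem_erase hv))
    _ = (1 - (1 - β) / n) * L - β * L / n ^ 2 := by
        rw [sum_const, card_erase_of_mem (mem_univ j), card_univ, Fintype.card_fin, nsmul_eq_mul,
          Nat.cast_pred hn]
        field_simp
        ring
    _ ≤ (1 - (1 - β) / n) * L := by
        have : 0 ≤ β * L / n ^ 2 := by positivity
        linarith

lemma one_sub_one_sub_div_nonneg (hn : 0 < n) (hβ : 0 ≤ β) : 0 ≤ 1 - (1 - β) / n := by
  have hn' : (1 : ℝ) ≤ n := Nat.one_le_cast.2 hn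
  rw [sub_nonneg, div_le_one (by positivity)]
  linarith

lemma contractsLip_glauber (hn : 0 < n) (hβ : 0 ≤ β) :
    ContractsLip (fun a b : Fin n → Bool => (hammingDist a b : ℝ)) (glauber n β)
      (1 - (1 - β) / n) := fun _ _ hL hg =>
  abs_sub_le_mul_hammingDist (mul_nonneg (one_sub_one_sub_div_nonneg hn hβ) hL)
    fun _ _ h => abs_glauber_mulVec_sub_le hn hβ hL hg h

def pairSum (σ : Fin n → Bool) : ℝ :=
  ∑ p ∈ univ.filter (fun p : Fin n × Fin n => p.1 < p.2), spin (σ p.1) * spin (σ p.2)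

lemma two_mul_pairSum (σ : Fin n → Bool) : 2 * pairSum σ = (∑ w, spin (σ w)) ^ 2 - n := by
  have hsplit (i j : Fin n) : spin (σ i) * spin (σ j) =
      ((if i < j then spin (σ i) * spin (σ j) else 0) +
        if j < i then spin (σ j) * spin (σ i) else 0) + if i = j then 1 else 0 := by
    rcases lt_trichotomy i j with h | rfl | h
    · simp [h, h.not_gt, h.ne]
    · simp [spin_mul_self]
    · simp [h, h.not_gt, h.ne', mul_comm]
  have hpair : pairSum σ = ∑ i, ∑ j, if i < j then spin (σ i) * spin (σ j) else 0 := by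
    rw [pairSum, sum_filter, ← univ_product_univ, sum_product]
  have hsq : (∑ w, spin (σ w)) ^ 2 = 2 * pairSum σ + n := by
    rw [sq, sum_mul_sum, sum_congr rfl fun i _ => sum_congr rfl fun j _ => hsplit i j, hpair]
    simp only [sum_add_distrib]
    rw [sum_comm (f := fun i j => if j < i then spin (σ j) * spin (σ i) else 0)]
    simp only [sum_ite_eq, mem_univ, if_true, sum_const, card_univ, Fintype.card_fin,
      nsmul_eq_mul, mul_one]
    ring
  linarith

lemma pairSum_sub_pairSum {σ τ : Fin n → Bool} {v : Fin n} (h : ∀ w, w ≠ v → τ w = σ w) :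
    pairSum τ - pairSum σ = (spin (τ v) - spin (σ v)) * localField σ v := by
  have hσ := two_mul_pairSum σ
  have hτ := two_mul_pairSum τ
  rw [← add_sum_erase _ _ (mem_univ v)] at hσ hτ
  rw [← localField, localField_eq_of_eq_off h] at hτ
  rw [← localField] at hσ
  linear_combination (hτ - hσ + spin_mul_self (τ v) - spin_mul_self (σ v)) / 2

lemma ite_pPlus_eq_exp_div (σ : Fin n → Bool) (v : Fin n) (b : Bool) :
    (if b then pPlus n β σ v else 1 - pPlus n β σ v) =
      exp (spin b * (β / n * localField σ v)) /
        (exp (β / n * localField σ v) + exp (-(β / n * localField σ v))) := by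
  set x := β / n * localField σ v
  have hp : pPlus n β σ v = exp x / (exp x + exp (-x)) := by
    rw [show x = β * (1 / n * localField σ v) by ring]; rfl
  have hpos : 0 < exp x + exp (-x) := by positivity
  cases b
  · rw [hp, if_neg Bool.false_ne_true, spin, if_neg Bool.false_ne_true]
    field_simp
    ring_nf
  · simp [hp, spin]

lemma exp_pairSum_mul_ite_pPlus {σ τ : Fin n → Bool} {v : Fin n}
    (h : ∀ w, w ≠ v → τ w = σ w) :
    exp (β / n * pairSum σ) * (if τ v then pPlus n β σ v else 1 - pPlus n β σ v) =
      exp (β / n * pairSum τ) * (if σ v then pPlus n β τ v else 1 - pPlus n β τ v) := by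
  rw [ite_pPlus_eq_exp_div, ite_pPlus_eq_exp_div, localField_eq_of_eq_off h, mul_div_assoc',
    mul_div_assoc', ← exp_add, ← exp_add]
  congr 2
  linear_combination -(β / n) * pairSum_sub_pairSum h

lemma gibbs_eq (σ : Fin n → Bool) :
    gibbs n β σ = exp (β / n * pairSum σ) / ∑ τ : Fin n → Bool, exp (β / n * pairSum τ) := rfl

lemma gibbs_nonneg (σ : Fin n → Bool) : 0 ≤ gibbs n β σ := by
  rw [gibbs_eq]; positivity

lemma sum_gibbs : ∑ σ, gibbs n β σ = 1 := by
  simp only [gibbs_eq, ← sum_div]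
  exact div_self (sum_pos (fun _ _ => exp_pos _) univ_nonempty).ne'

lemma gibbs_mul_glauber (σ τ : Fin n → Bool) :
    gibbs n β σ * glauber n β σ τ = gibbs n β τ * glauber n β τ σ := by
  have hsite : exp (β / n * pairSum σ) * ∑ v, (if ∀ w, w ≠ v → τ w = σ w then
        (if τ v then pPlus n β σ v else 1 - pPlus n β σ v) else 0) =
      exp (β / n * pairSum τ) * ∑ v, (if ∀ w, w ≠ v → σ w = τ w then
        (if σ v then pPlus n β τ v else 1 - pPlus n β τ v) else 0) := by
    simp only [mul_sum]
    refine sum_congr rfl fun v _ => ?_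
    by_cases h : ∀ w, w ≠ v → τ w = σ w
    · rw [if_pos h, if_pos fun w hw => (h w hw).symm, exp_pairSum_mul_ite_pPlus h]
    · rw [if_neg h, if_neg fun h' => h fun w hw => (h' w hw).symm, mul_zero, mul_zero]
  rw [gibbs_eq, gibbs_eq, glauber, glauber]
  linear_combination (1 / n / ∑ τ : Fin n → Bool, exp (β / n * pairSum τ)) * hsite

lemma vecMul_gibbs_glauber (hn : 0 < n) : gibbs n β ᵥ* glauber n β = gibbs n β :=
  vecMul_eq_self_of_detailed_balance (isStochastic_glauber hn) gibbs_mul_glauber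

lemma dW_step_glauber_le (hn : 0 < n) (hβ : 0 ≤ β) {σ σ' : Fin n → Bool}
    (h : hammingDist σ σ' = 1) :
    dW (fun a b : Fin n → Bool => (hammingDist a b : ℝ))
      (step (glauber n β) (delta σ)) (step (glauber n β) (delta σ')) ≤ 1 - (1 - β) / n := by
  simpa [h] using dW_step_delta_le (contractsLip_glauber hn hβ)
    (one_sub_one_sub_div_nonneg hn hβ) (x := σ) (y := σ') (Nat.cast_nonneg _)

lemma pr_le_abs_sub_integ_gibbs_le (hn : 0 < n) (hβ0 : 0 ≤ β) (hβ : β < 1)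
    {f : (Fin n → Bool) → ℝ} (hf : IsLip (fun a b : Fin n → Bool => (hammingDist a b : ℝ)) f)
    {u : ℝ} (hu : 0 ≤ u) :
    pr (gibbs n β) (fun σ => u ≤ |f σ - integ (gibbs n β) f|) ≤
      2 * exp (-u ^ 2 / (8 / (1 - β) * n)) := by
  set α : ℝ := 1 - (1 - β) / n
  have hα0 : 0 ≤ α := one_sub_one_sub_div_nonneg hn hβ0
  have hα1 : α < 1 := sub_lt_self 1 (div_pos (sub_pos.2 hβ) (Nat.cast_pos.2 hn))
  refine (pr_le_abs_sub_integ_le (isStochastic_glauber hn)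
    (fun _ _ => hammingDist_le_one_of_glauber_ne_zero) (contractsLip_glauber hn hβ0) hα0 hα1
    gibbs_nonneg sum_gibbs (vecMul_gibbs_glauber hn) hf hu).trans ?_
  -- `1 - α ^ 2 ≥ 1 - α = (1 - β) / n`
  have hgap : (1 - β) / n ≤ 1 - α ^ 2 := by nlinarith
  have hgap0 : 0 < (1 - β) / n := div_pos (sub_pos.2 hβ) (Nat.cast_pos.2 hn)
  have hden : 8 / (1 - α ^ 2) ≤ 8 / (1 - β) * n := by
    rw [div_mul_eq_mul_div, ← div_div_eq_mul_div]
    exact div_le_div_of_nonneg_left (by norm_num) hgap0 hgap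
  gcongr 2 * exp ?_
  rw [neg_div, neg_div, neg_le_neg_iff]
  exact div_le_div_of_nonneg_left (sq_nonneg u) (div_pos (by norm_num) (hgap0.trans_le hgap)) hden

end CurieWeiss

/-- For the subcritical (`β < 1`) Curie-Weiss model: one-step Wasserstein
contraction `1 - (1-β)/n` for the Glauber dynamics between configurations at
Hamming distance 1, and consequent normal concentration at scale `√n` of the
Gibbs measure for Hamming-Lipschitz functions. -/
theorem stmt15 (β : ℝ) (hβ0 : 0 ≤ β) (hβ : β < 1) :
    (∀ n : ℕ, 0 < n → ∀ σ σ' : Fin n → Bool, hammingDist σ σ' = 1 →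
      dW (fun a b : Fin n → Bool => (hammingDist a b : ℝ))
          (step (glauber n β) (delta σ)) (step (glauber n β) (delta σ'))
        ≤ 1 - (1 - β) / n) ∧
    ∃ c C : ℝ, 0 < c ∧ 0 < C ∧
      ∀ n : ℕ, 0 < n → ∀ u : ℝ, 0 < u →
        ∀ f : (Fin n → Bool) → ℝ,
          IsLip (fun a b : Fin n → Bool => (hammingDist a b : ℝ)) f →
          pr (gibbs n β) (fun σ => u ≤ |f σ - integ (gibbs n β) f|)
            ≤ C * Real.exp (-u ^ 2 / (c * n)) :=
  ⟨fun _ hn _ _ h => CurieWeiss.dW_step_glauber_le hn hβ0 h,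
    8 / (1 - β), 2, div_pos (by norm_num) (sub_pos.2 hβ), two_pos,
    fun _ hn _ hu _ hf => CurieWeiss.pr_le_abs_sub_integ_gibbs_le hn hβ0 hβ hf hu.le⟩
end
end

section
/- For the Curie-Weiss Ising model with β > 1, the Gibbs measure π does not exhibit normal concentration at scale √n: there exists a constant c > 0 such that π({σ : m(σ) ≥ cn}) ≥ 1/4 and π({σ : m(σ) ≤ −cn}) ≥ 1/4, where m(σ) = Σ_{i=1}^n σ(i) is the magnetisation; note that m/2 is 1-Lipschitz for the Hamming metric and π(m) = 0. -/
/-!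
The Gibbs weight of `σ` depends only on `m = mag σ`: it is proportional to `exp (β m² / 2n)`,
and the `n.choose k` configurations with `k` spins up all have `m = 2k - n`. Going from `k` to
`k + 1` multiplies the binomial coefficient by `(n - k)/(k + 1) ≈ 1 - 2(m + 1)/n` and the
exponential by `exp (2β(m + 1)/n)`, so for `β > 1` the level weights increase as long as
`0 ≤ m ≤ (1 - 1/β) n`. With `c = (1 - 1/β)/4`, shifting `m` by about `cn` therefore maps the
levels of `[0, cn)` injectively to heavier levels of `[cn, ∞)`. Spin-flip symmetry makes the
two tails equally heavy and splits the centre evenly, so each tail carries at least a quarter of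
the mass; the same symmetry gives mean zero.
-/

open scoped BigOperators Classical
open Filter

noncomputable section

variable {S : Type*}

/-- The magnetisation of a configuration. -/
def mag {n : ℕ} (σ : Fin n → Bool) : ℝ := ∑ i, spin (σ i)

open Finset

lemma spin_sq (b : Bool) : spin b ^ 2 = 1 := by cases b <;> simp [spin]

lemma spin_not (b : Bool) : spin (!b) = -spin b := by cases b <;> simp [spin]

lemma abs_spin_sub_spin_le (a b : Bool) :
    |spin a - spin b| ≤ 2 * (if a = b then 0 else 1) := by
  cases a <;> cases b <;> norm_num [spin]

lemma mag_not {n : ℕ} (σ : Fin n → Bool) : mag (fun i => !σ i) = -mag σ := by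
  simp [mag, spin_not]

lemma mag_decide_mem {n : ℕ} (s : Finset (Fin n)) :
    mag (fun i => decide (i ∈ s)) = 2 * #s - n := by
  have : ∀ i, spin (decide (i ∈ s)) = 2 * (if i ∈ s then 1 else 0) - 1 := by
    intro i; by_cases h : i ∈ s <;> norm_num [spin, h]
  simp only [mag, this, sum_sub_distrib, ← mul_sum, sum_boole]
  simp

lemma isLip_mag_div_two (n : ℕ) :
    IsLip (fun a b : Fin n → Bool => (hammingDist a b : ℝ)) (fun σ => mag σ / 2) := by
  intro σ τ
  have h : |mag σ - mag τ| ≤ 2 * hammingDist σ τ := by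
    calc |mag σ - mag τ| = |∑ i, (spin (σ i) - spin (τ i))| := by
          rw [mag, mag, sum_sub_distrib]
      _ ≤ ∑ i, |spin (σ i) - spin (τ i)| := abs_sum_le_sum_abs _ _
      _ ≤ ∑ i, 2 * (if σ i = τ i then 0 else 1) :=
          sum_le_sum fun i _ => abs_spin_sub_spin_le _ _
      _ = 2 * hammingDist σ τ := by
          simp [hammingDist, sum_ite, Finset.filter_not, mul_comm]
  rw [← sub_div, abs_div, abs_two]
  linarith

lemma two_mul_sum_lt_mul {ι R : Type*} [Fintype ι] [LinearOrder ι] [CommRing R]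
    (f : ι → R) :
    2 * ∑ p ∈ univ.filter (fun p : ι × ι => p.1 < p.2), f p.1 * f p.2
      = (∑ i, f i) ^ 2 - ∑ i, f i ^ 2 := by
  have hsplit : ∀ p : ι × ι, f p.1 * f p.2 = (if p.1 < p.2 then f p.1 * f p.2 else 0)
      + (if p.2 < p.1 then f p.2 * f p.1 else 0) + (if p.1 = p.2 then f p.1 ^ 2 else 0) := by
    rintro ⟨i, j⟩
    rcases lt_trichotomy i j with h | rfl | h
    · simp [h, h.ne, h.not_gt]
    · simp [sq]
    · simp [h, h.ne', h.not_gt, mul_comm]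
  have hswap : ∑ p : ι × ι, (if p.2 < p.1 then f p.2 * f p.1 else 0)
      = ∑ p : ι × ι, (if p.1 < p.2 then f p.1 * f p.2 else 0) :=
    Fintype.sum_equiv (Equiv.prodComm ι ι) _ _ fun p => rfl
  have hdiag : ∑ p : ι × ι, (if p.1 = p.2 then f p.1 ^ 2 else 0) = ∑ i, f i ^ 2 := by
    rw [← univ_product_univ, sum_product]
    simp
  rw [sq, sum_mul_sum, ← sum_product', univ_product_univ, Fintype.sum_congr _ _ hsplit,
    sum_add_distrib, sum_add_distrib, hswap, hdiag, sum_filter]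
  ring

def cwWeight (n : ℕ) (β x : ℝ) : ℝ := Real.exp (β * x ^ 2 / (2 * n))

section CurieWeiss

variable {n : ℕ} {β : ℝ}

lemma cwWeight_neg (x : ℝ) : cwWeight n β (-x) = cwWeight n β x := by
  simp [cwWeight]

lemma two_mul_sum_lt_spin_mul (σ : Fin n → Bool) :
    2 * ∑ p ∈ univ.filter (fun p : Fin n × Fin n => p.1 < p.2), spin (σ p.1) * spin (σ p.2)
      = mag σ ^ 2 - n := by
  rw [two_mul_sum_lt_mul (fun i => spin (σ i))]
  simp [mag, spin_sq]

lemma gibbs_eq_cwWeight_div (σ : Fin n → Bool) :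
    gibbs n β σ = cwWeight n β (mag σ) / ∑ τ : Fin n → Bool, cwWeight n β (mag τ) := by
  have hexp : ∀ τ : Fin n → Bool,
      Real.exp ((β / n) * ∑ p ∈ univ.filter (fun p : Fin n × Fin n => p.1 < p.2),
        spin (τ p.1) * spin (τ p.2)) = cwWeight n β (mag τ) * Real.exp (-(β / n * n / 2)) := by
    intro τ
    rw [cwWeight, ← Real.exp_add]
    congr 1
    linear_combination (β / (2 * n)) * two_mul_sum_lt_spin_mul τ
  rw [gibbs, hexp, Fintype.sum_congr _ _ hexp, ← sum_mul,
    mul_div_mul_right _ _ (Real.exp_ne_zero _)]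

lemma sum_comp_neg_mag {M : Type*} [AddCommMonoid M] (f : ℝ → M) :
    ∑ σ : Fin n → Bool, f (-mag σ) = ∑ σ : Fin n → Bool, f (mag σ) := by
  simp_rw [← mag_not]
  exact Fintype.sum_equiv (Function.Involutive.toPerm _ fun σ => funext fun i => Bool.not_not _)
    _ _ fun _ => rfl

lemma sum_comp_mag {M : Type*} [AddCommMonoid M] (f : ℝ → M) :
    ∑ σ : Fin n → Bool, f (mag σ) =
      ∑ k ∈ range (n + 1), n.choose k • f (2 * k - n) := by
  have hbij : Function.Bijective fun (s : Finset (Fin n)) i => decide (i ∈ s) := by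
    refine ⟨fun s t h => ?_, fun σ => ⟨univ.filter fun i => σ i, by simp⟩⟩
    ext i
    simpa using congrFun h i
  rw [← Fintype.sum_bijective _ hbij (fun s => f (2 * #s - n)) _
      fun s => by rw [mag_decide_mem], ← powerset_univ,
    sum_powerset_apply_card (fun k => f (2 * k - n)), card_fin]

def magSum (n : ℕ) (β : ℝ) (P : ℝ → Prop) : ℝ :=
  ∑ σ : Fin n → Bool, if P (mag σ) then cwWeight n β (mag σ) else 0

lemma magSum_true_pos : 0 < magSum n β fun _ => True := by
  simp only [magSum, if_true]
  exact sum_pos (fun σ _ => Real.exp_pos _) univ_nonempty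

lemma pr_gibbs_mag (P : ℝ → Prop) :
    pr (gibbs n β) (fun σ => P (mag σ)) = magSum n β P / magSum n β fun _ => True := by
  simp only [pr, tsum_fintype, gibbs_eq_cwWeight_div, magSum, if_true, sum_div]
  exact sum_congr rfl fun σ _ => by split_ifs <;> simp

lemma integ_gibbs_mag : integ (gibbs n β) mag = 0 := by
  have hodd := sum_comp_neg_mag (n := n) fun x => cwWeight n β x * x
  simp only [cwWeight_neg, mul_neg, sum_neg_distrib, neg_eq_self] at hodd
  simp [integ, tsum_fintype, gibbs_eq_cwWeight_div, div_mul_eq_mul_div, ← sum_div, hodd]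

lemma magSum_comp_neg (P : ℝ → Prop) : magSum n β (fun x => P (-x)) = magSum n β P := by
  simp only [magSum]
  rw [← sum_comp_neg_mag fun x => if P x then cwWeight n β x else 0]
  simp [cwWeight_neg]

lemma magSum_le_add {P Q R : ℝ → Prop} (h : ∀ x, P x → Q x ∨ R x) :
    magSum n β P ≤ magSum n β Q + magSum n β R := by
  simp only [magSum, ← sum_add_distrib]
  refine sum_le_sum fun σ _ => ?_
  have hw : 0 ≤ cwWeight n β (mag σ) := (Real.exp_pos _).le
  by_cases hQ : Q (mag σ) <;> by_cases hR : R (mag σ) <;>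
    simp only [hQ, hR, if_true, if_false] <;> split_ifs with hP <;>
    first | linarith | exact absurd (h _ hP) (by tauto)

def levelWeight (n : ℕ) (β : ℝ) (k : ℕ) : ℝ := n.choose k * cwWeight n β (2 * k - n)

lemma magSum_eq_sum_levelWeight (P : ℝ → Prop) :
    magSum n β P = ∑ k ∈ range (n + 1), if P (2 * k - n) then levelWeight n β k else 0 := by
  rw [magSum, sum_comp_mag fun x => if P x then cwWeight n β x else 0]
  simp [levelWeight]

lemma levelWeight_le_succ (hβ : 0 ≤ β) (hn : 0 < n) {k : ℕ} (hk : n ≤ 2 * k + 1)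
    (hkβ : β * (2 * k - n) ≤ (β - 1) * n) :
    levelWeight n β k ≤ levelWeight n β (k + 1) := by
  have hnr : (0 : ℝ) < n := by exact_mod_cast hn
  have hkr : (n : ℝ) ≤ 2 * k + 1 := by exact_mod_cast hk
  have hkn : k < n := by
    by_contra! h
    have : (n : ℝ) ≤ k := by exact_mod_cast h
    nlinarith
  set y := 2 * β * (2 * k + 1 - n) / n with hy
  have hchoose : (n.choose (k + 1) : ℝ) * (k + 1) = n.choose k * (n - k) := by
    rw [← Nat.cast_sub hkn.le]
    exact_mod_cast Nat.choose_succ_right_eq n k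
  have hweight : cwWeight n β (2 * ↑(k + 1) - n) = cwWeight n β (2 * k - n) * Real.exp y := by
    rw [cwWeight, cwWeight, ← Real.exp_add, hy]
    congr 1
    field_simp
    push_cast
    ring
  have hratio : 1 ≤ 2 * β * (n - k) / n := by
    rw [le_div_iff₀ hnr]
    linarith
  have hlin : (k + 1 : ℝ) ≤ (n - k) * (1 + y) := by
    have : (n - k) * (1 + y) = n - k + (2 * k + 1 - n) * (2 * β * (n - k) / n) := by
      rw [hy]; field_simp
    rw [this]
    nlinarith
  have hkn' : (k : ℝ) < n := by exact_mod_cast hkn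
  have hkey : (k + 1 : ℝ) ≤ (n - k) * Real.exp y :=
    hlin.trans (mul_le_mul_of_nonneg_left (by linarith [Real.add_one_le_exp y]) (by linarith))
  have hpos : 0 ≤ (n.choose k : ℝ) * cwWeight n β (2 * k - n) :=
    mul_nonneg (Nat.cast_nonneg _) (Real.exp_pos _).le
  refine le_of_mul_le_mul_right ?_ (by positivity : (0 : ℝ) < k + 1)
  calc levelWeight n β k * (k + 1)
      ≤ n.choose k * cwWeight n β (2 * k - n) * ((n - k) * Real.exp y) :=
        mul_le_mul_of_nonneg_left hkey hpos
    _ = levelWeight n β (k + 1) * (k + 1) := by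
        rw [levelWeight, hweight]
        linear_combination (-(cwWeight n β (2 * k - n) * Real.exp y)) * hchoose

lemma levelWeight_mono (hβ : 0 ≤ β) (hn : 0 < n) {k l : ℕ} (hk : n ≤ 2 * k + 1)
    (hkl : k ≤ l) (hl : β * (2 * l - n) ≤ (β - 1) * n) :
    levelWeight n β k ≤ levelWeight n β l := by
  induction l, hkl using Nat.le_induction with
  | base => exact le_rfl
  | succ l hkl ih =>
    have hl' : β * (2 * l - n) ≤ (β - 1) * n := by push_cast at hl; nlinarith
    exact (ih hl').trans (levelWeight_le_succ hβ hn (by omega) hl')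

lemma magSum_central_le_magSum_tail {r : ℝ} (hβ : 0 ≤ β) (hn : 0 < n) (hr : 0 ≤ r)
    (hwin : β * (2 * r + 2) ≤ (β - 1) * n) :
    magSum n β (fun x => 0 ≤ x ∧ x < r) ≤ magSum n β fun x => r ≤ x := by
  set s := ⌈r / 2⌉₊
  have hs : r / 2 ≤ s := Nat.le_ceil _
  have hs' : (s : ℝ) < r / 2 + 1 := Nat.ceil_lt_add_one (by positivity)
  have hnr : (0 : ℝ) < n := by exact_mod_cast hn
  set A := (range (n + 1)).filter fun k : ℕ => 0 ≤ 2 * (k : ℝ) - n ∧ 2 * (k : ℝ) - n < r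
  simp only [magSum_eq_sum_levelWeight, ← sum_filter]
  -- `congr!` reconciles the `Decidable` instances of the `ite` and of the `filter`.
  calc _ = ∑ k ∈ A, levelWeight n β k := by rw [sum_filter]; congr! 2
    _ ≤ ∑ k ∈ A, levelWeight n β (k + s) := by
        refine sum_le_sum fun k hk => ?_
        obtain ⟨-, hk0, hkr⟩ := by simpa only [A, mem_filter, mem_range] using hk
        refine levelWeight_mono hβ hn ?_ (Nat.le_add_right k s) ?_
        · have : (n : ℝ) ≤ 2 * k + 1 := by linarith
          exact_mod_cast this
        · push_cast
          nlinarith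
    _ = ∑ k ∈ A.map (addRightEmbedding s), levelWeight n β k := by rw [sum_map]; rfl
    _ ≤ ∑ k ∈ (range (n + 1)).filter fun k : ℕ => r ≤ 2 * (k : ℝ) - n,
          levelWeight n β k := by
        refine sum_le_sum_of_subset_of_nonneg ?_ fun k _ _ =>
          mul_nonneg (Nat.cast_nonneg _) (Real.exp_pos _).le
        intro j hj
        obtain ⟨k, hk, rfl⟩ := mem_map.mp hj
        obtain ⟨-, hk0, hkr⟩ := by simpa only [A, mem_filter, mem_range] using hk
        simp only [mem_filter, mem_range, addRightEmbedding_apply, Nat.cast_add]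
        constructor
        · have : (k : ℝ) + s < n + 1 := by nlinarith
          exact_mod_cast this
        · linarith

lemma quarter_le_pr_gibbs_mag_ge {r : ℝ}
    (h : magSum n β (fun x => 0 ≤ x ∧ x < r) ≤ magSum n β fun x => r ≤ x) :
    1 / 4 ≤ pr (gibbs n β) fun σ => r ≤ mag σ := by
  have hhalf : magSum n β (fun _ => True) ≤ 2 * magSum n β fun x => 0 ≤ x := by
    have := magSum_le_add (n := n) (β := β) (P := fun _ => True) (Q := fun x => 0 ≤ x)
      (R := fun x => 0 ≤ -x) fun x _ => le_total 0 x |>.imp id neg_nonneg.mpr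
    rw [magSum_comp_neg (fun x => 0 ≤ x)] at this
    linarith
  have htail : magSum n β (fun x => 0 ≤ x) ≤ 2 * magSum n β fun x => r ≤ x := by
    have := magSum_le_add (n := n) (β := β) (P := fun x => 0 ≤ x)
      (Q := fun x => 0 ≤ x ∧ x < r) (R := fun x => r ≤ x) fun x hx => by
        rcases lt_or_ge x r with hxr | hxr
        exacts [Or.inl ⟨hx, hxr⟩, Or.inr hxr]
    linarith
  rw [pr_gibbs_mag (fun x => r ≤ x), le_div_iff₀ magSum_true_pos]
  linarith

lemma pr_gibbs_mag_le_neg (r : ℝ) :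
    pr (gibbs n β) (fun σ => mag σ ≤ -r) = pr (gibbs n β) fun σ => r ≤ mag σ := by
  rw [pr_gibbs_mag (fun x => x ≤ -r), pr_gibbs_mag (fun x => r ≤ x),
    ← magSum_comp_neg (fun x => r ≤ x)]
  simp only [le_neg]

end CurieWeiss

/-- For the supercritical (`β > 1`) Curie-Weiss model, the Gibbs measure fails
normal concentration at scale `√n`: the magnetisation is bi-modal, with mass at
least `1/4` at each of `{m ≥ cn}` and `{m ≤ -cn}` for a constant `c > 0`, even
though `m/2` is 1-Lipschitz for the Hamming metric and the mean magnetisation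
vanishes. -/
theorem stmt16 (β : ℝ) (hβ : 1 < β) :
    ∃ c : ℝ, 0 < c ∧ ∃ N : ℕ, ∀ n : ℕ, N ≤ n → 0 < n →
      1 / 4 ≤ pr (gibbs n β) (fun σ => c * n ≤ mag σ) ∧
      1 / 4 ≤ pr (gibbs n β) (fun σ => mag σ ≤ -(c * n)) ∧
      integ (gibbs n β) mag = 0 ∧
      IsLip (fun a b : Fin n → Bool => (hammingDist a b : ℝ))
        (fun σ => mag σ / 2) := by
  have hβ0 : 0 < β := by linarith
  refine ⟨(β - 1) / (4 * β), by positivity, ⌈4 * β / (β - 1)⌉₊, fun n hN hn => ?_⟩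
  have hwin : β * (2 * ((β - 1) / (4 * β) * n) + 2) ≤ (β - 1) * n := by
    have : 4 * β / (β - 1) ≤ n := (Nat.le_ceil _).trans (by exact_mod_cast hN)
    rw [div_le_iff₀ (by linarith)] at this
    field_simp
    linarith
  have hright := quarter_le_pr_gibbs_mag_ge
    (magSum_central_le_magSum_tail hβ0.le hn (by positivity) hwin)
  exact ⟨hright, pr_gibbs_mag_le_neg _ ▸ hright, integ_gibbs_mag, isLip_mag_div_two n⟩
end
end
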